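/- arXiv:2209.00734 — 5 statements merged into one kernel-verified Lean document; each statement's English description precedes it below -/
import Mathlib

section
/- For every real λ with 0 ≤ λ ≤ 1 and every real x with |x| ≤ π, one has |1 + λ(e^{ix} − 1)| = (1 − 2λ(1−λ)(1 − cos x))^{1/2} ≤ exp(−(1/2)·λ(1−λ)·x² + (1/24)·λ(1−λ)·x⁴). -/
/-!
Expanding the square, `|1 + λ(e^{ix} - 1)|² = 1 - 2λ(1-λ)(1 - cos x)`. With `t = λ(1-λ) ≥ 0`,
the Taylor bound `1 - cos x ≥ x²/2 - x⁴/24` gives `1 - 2t(1 - cos x) ≤ 1 + 2E ≤ exp (2E)` for the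
exponent `E = -t x²/2 + t x⁴/24`, and the estimate follows on taking square roots.
-/

open Real

theorem Real.cos_le_one_sub_sq_div_two_add_pow_four_div (x : ℝ) :
    cos x ≤ 1 - x ^ 2 / 2 + x ^ 4 / 24 := by
  wlog hx : 0 ≤ x
  · simpa [Even.neg_pow (by decide : Even 4)] using this (-x) (by linarith)
  let f (t : ℝ) : ℝ := 1 - t ^ 2 / 2 + t ^ 4 / 24 - cos t
  have hderiv (t : ℝ) : deriv f t = sin t - (t - t ^ 3 / 6) := by
    simp (disch := fun_prop) [f]
    ring
  have hmono : MonotoneOn f (Set.Ici 0) := by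
    apply monotoneOn_of_deriv_nonneg (convex_Ici 0) (by fun_prop) (by fun_prop)
    intro t ht
    rw [interior_Ici] at ht
    rw [hderiv, sub_nonneg]
    exact sin_ge_sub_cube (le_of_lt ht)
  have hf := hmono Set.self_mem_Ici hx hx
  simp [f] at hf
  linarith

theorem Complex.norm_one_add_mul_exp_mul_I_sub_one_sq (a x : ℝ) :
    ‖(1 + a * (exp (x * I) - 1) : ℂ)‖ ^ 2 = 1 - 2 * a * (1 - a) * (1 - Real.cos x) := by
  rw [← normSq_eq_norm_sq, normSq_apply]
  simp only [add_re, add_im, mul_re, mul_im, sub_re, sub_im, one_re, one_im, ofReal_re,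
    ofReal_im, exp_ofReal_mul_I_re, exp_ofReal_mul_I_im]
  linear_combination a ^ 2 * Real.sin_sq_add_cos_sq x

theorem Real.sqrt_one_sub_two_mul_one_sub_cos_le_exp {t : ℝ} (ht : 0 ≤ t) (x : ℝ) :
    √(1 - 2 * t * (1 - cos x)) ≤ exp (-(1 / 2) * t * x ^ 2 + (1 / 24) * t * x ^ 4) := by
  have hcos :
      1 - 2 * t * (1 - cos x) ≤ 1 + 2 * (-(1 / 2) * t * x ^ 2 + (1 / 24) * t * x ^ 4) := by
    linarith [mul_le_mul_of_nonneg_left (cos_le_one_sub_sq_div_two_add_pow_four_div x) ht]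
  rw [sqrt_le_iff, ← exp_nat_mul]
  exact ⟨(exp_pos _).le, hcos.trans (add_comm (1 : ℝ) _ ▸ add_one_le_exp _)⟩

theorem exp_estimate_general (lam x : ℝ) (h0 : 0 ≤ lam) (h1 : lam ≤ 1) :
    ‖(1 + lam * (Complex.exp (x * Complex.I) - 1) : ℂ)‖ =
      Real.sqrt (1 - 2 * lam * (1 - lam) * (1 - Real.cos x)) ∧
    Real.sqrt (1 - 2 * lam * (1 - lam) * (1 - Real.cos x)) ≤
      Real.exp (-(1 / 2) * (lam * (1 - lam)) * x ^ 2 +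
        (1 / 24) * (lam * (1 - lam)) * x ^ 4) := by
  constructor
  · rw [← Complex.norm_one_add_mul_exp_mul_I_sub_one_sq, sqrt_sq (norm_nonneg _)]
  · simpa only [mul_assoc] using
      sqrt_one_sub_two_mul_one_sub_cos_le_exp (mul_nonneg h0 (sub_nonneg.2 h1)) x

theorem exp_estimate (lam x : ℝ) (h0 : 0 ≤ lam) (h1 : lam ≤ 1) (hx : |x| ≤ Real.pi) :
    ‖(1 + lam * (Complex.exp (x * Complex.I) - 1) : ℂ)‖ =
      Real.sqrt (1 - 2 * lam * (1 - lam) * (1 - Real.cos x)) ∧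
    Real.sqrt (1 - 2 * lam * (1 - lam) * (1 - Real.cos x)) ≤
      Real.exp (-(1 / 2) * (lam * (1 - lam)) * x ^ 2 +
        (1 / 24) * (lam * (1 - lam)) * x ^ 4) :=
  exp_estimate_general lam x h0 h1
end

section
/- There exists m₀ > 0 such that for every real m ≥ m₀, the integral I(m) = ∫_{−π/16}^{π/16} exp(−m x² + m x⁴) dx satisfies |I(m) − √(π/m)| ≤ 2 m^{−1} √(π/m); that is, I(m) = (1 ± 2m^{−1})·√(π/m). -/
/-!
On `[-a, a]` the quartic term only helps, `exp (-m x²) ≤ exp (-m x² + m x⁴)`, while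
`exp t ≤ 1 + t exp t` and `x⁴ ≤ a² x²` give
`exp (-m x² + m x⁴) ≤ exp (-m x²) + m x⁴ exp (-m (1 - a²) x²)`.
So the integral lies between the Gaussian integral truncated to `[-a, a]` and the full Gaussian
integral `√(π/m)` plus `m` times a fourth Gaussian moment. The truncation costs at most `a⁻⁴` times
the fourth moment (Chebyshev), and the fourth moment `3 √(π/c) / (4 c²)`, obtained by integrating by
parts twice, makes both errors `O(m⁻¹ √(π/m))`.
-/

open MeasureTheory Real Set

section GaussianMoments

variable {c : ℝ}

lemma integrable_pow_mul_exp_neg_mul_sq (hc : 0 < c) (n : ℕ) :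
    Integrable fun x : ℝ => x ^ n * exp (-c * x ^ 2) := by
  simpa [rpow_natCast] using
    integrable_rpow_mul_exp_neg_mul_sq hc (s := n) (neg_one_lt_zero.trans_le n.cast_nonneg)

lemma integral_pow_add_two_mul_exp_neg_mul_sq (hc : 0 < c) (n : ℕ) :
    ∫ x, x ^ (n + 2) * exp (-c * x ^ 2) = (n + 1) / (2 * c) * ∫ x, x ^ n * exp (-c * x ^ 2) := by
  have hderiv : ∀ x : ℝ, HasDerivAt (fun y => y ^ (n + 1) * exp (-c * y ^ 2))
      ((n + 1) * (x ^ n * exp (-c * x ^ 2)) - 2 * c * (x ^ (n + 2) * exp (-c * x ^ 2))) x := by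
    intro x
    have hexp : HasDerivAt (fun y => exp (-c * y ^ 2)) (exp (-c * x ^ 2) * (-c * (2 * x))) x := by
      simpa using ((hasDerivAt_pow 2 x).const_mul (-c)).exp
    refine ((hasDerivAt_pow (n + 1) x).mul hexp).congr_deriv ?_
    rw [Nat.add_sub_cancel]
    push_cast
    ring
  have hn := (integrable_pow_mul_exp_neg_mul_sq hc n).const_mul (n + 1 : ℝ)
  have hn2 := (integrable_pow_mul_exp_neg_mul_sq hc (n + 2)).const_mul (2 * c)
  have hzero := integral_eq_zero_of_hasDerivAt_of_integrable hderiv (hn.sub hn2)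
    (integrable_pow_mul_exp_neg_mul_sq hc (n + 1))
  rw [integral_sub hn hn2, integral_const_mul, integral_const_mul, sub_eq_zero] at hzero
  rw [div_mul_eq_mul_div, eq_div_iff (by positivity)]
  linarith

lemma integral_pow_four_mul_exp_neg_mul_sq (hc : 0 < c) :
    ∫ x, x ^ 4 * exp (-c * x ^ 2) = 3 / (4 * c ^ 2) * √(π / c) := by
  have h2 := integral_pow_add_two_mul_exp_neg_mul_sq hc 0
  have h4 := integral_pow_add_two_mul_exp_neg_mul_sq hc 2
  simp only [zero_add, pow_zero, one_mul, integral_gaussian] at h2 h4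
  rw [h4, h2]
  field_simp
  ring

end GaussianMoments

lemma sub_le_intervalIntegral_exp_neg_mul_sq {m a : ℝ} (hm : 0 < m) (ha : 0 < a) :
    √(π / m) - 3 / (4 * a ^ 4 * m ^ 2) * √(π / m) ≤ ∫ x in -a..a, exp (-m * x ^ 2) := by
  have hg := integrable_exp_neg_mul_sq hm
  have hmoment := (integrable_pow_mul_exp_neg_mul_sq hm 4).const_mul (a ^ 4)⁻¹
  calc √(π / m) - 3 / (4 * a ^ 4 * m ^ 2) * √(π / m)
      = ∫ x, (exp (-m * x ^ 2) - (a ^ 4)⁻¹ * (x ^ 4 * exp (-m * x ^ 2))) := by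
        rw [integral_sub hg hmoment, integral_const_mul, integral_gaussian,
          integral_pow_four_mul_exp_neg_mul_sq hm]
        field_simp
    _ ≤ ∫ x, (Ioc (-a) a).indicator (fun x => exp (-m * x ^ 2)) x := by
        refine integral_mono (hg.sub hmoment) (hg.indicator measurableSet_Ioc) fun x => ?_
        by_cases hx : x ∈ Ioc (-a) a
        · rw [indicator_of_mem hx]
          have : 0 ≤ (a ^ 4)⁻¹ * (x ^ 4 * exp (-m * x ^ 2)) := by positivity
          linarith
        · rw [indicator_of_notMem hx]
          have hax : a ^ 4 ≤ x ^ 4 := by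
            rw [mem_Ioc, not_and_or, not_lt, not_le] at hx
            have : a ≤ |x| := le_abs'.mpr (hx.imp_right le_of_lt)
            simpa [Even.pow_abs (by decide : Even 4)] using pow_le_pow_left₀ ha.le this 4
          have : 1 ≤ (a ^ 4)⁻¹ * x ^ 4 := by rwa [one_le_inv_mul₀ (by positivity)]
          nlinarith [exp_pos (-m * x ^ 2)]
    _ = ∫ x in -a..a, exp (-m * x ^ 2) := by
        rw [integral_indicator measurableSet_Ioc, intervalIntegral.integral_of_le (by linarith)]

lemma exp_le_one_add_mul_exp (t : ℝ) : exp t ≤ 1 + t * exp t := by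
  have hinv : exp t * exp (-t) = 1 := by rw [← exp_add, add_neg_cancel, exp_zero]
  nlinarith [mul_le_mul_of_nonneg_left (one_sub_le_exp_neg t) (exp_pos t).le]

lemma exp_neg_mul_sq_add_mul_pow_four_le {m a x : ℝ} (hm : 0 ≤ m) (hx : x ^ 2 ≤ a ^ 2) :
    exp (-m * x ^ 2 + m * x ^ 4) ≤
      exp (-m * x ^ 2) + m * (x ^ 4 * exp (-(m * (1 - a ^ 2)) * x ^ 2)) := by
  have hquartic : m * x ^ 4 ≤ m * a ^ 2 * x ^ 2 := by
    have := mul_le_mul_of_nonneg_left hx (mul_nonneg hm (sq_nonneg x))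
    nlinarith
  calc exp (-m * x ^ 2 + m * x ^ 4)
      = exp (-m * x ^ 2) * exp (m * x ^ 4) := exp_add _ _
    _ ≤ exp (-m * x ^ 2) * (1 + m * x ^ 4 * exp (m * x ^ 4)) := by
        gcongr; exact exp_le_one_add_mul_exp _
    _ = exp (-m * x ^ 2) + m * (x ^ 4 * exp (-m * x ^ 2 + m * x ^ 4)) := by
        rw [exp_add]; ring
    _ ≤ exp (-m * x ^ 2) + m * (x ^ 4 * exp (-(m * (1 - a ^ 2)) * x ^ 2)) := by
        gcongr
        linarith

lemma intervalIntegral_exp_neg_mul_sq_add_mul_pow_four_le {m a : ℝ} (hm : 0 < m) (ha : 0 ≤ a)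
    (ha1 : a ^ 2 < 1) :
    ∫ x in -a..a, exp (-m * x ^ 2 + m * x ^ 4) ≤
      √(π / m) + m * (3 / (4 * (m * (1 - a ^ 2)) ^ 2) * √(π / (m * (1 - a ^ 2)))) := by
  have hc : 0 < m * (1 - a ^ 2) := mul_pos hm (by linarith)
  have hg := integrable_exp_neg_mul_sq hm
  have hmoment := (integrable_pow_mul_exp_neg_mul_sq hc 4).const_mul m
  calc ∫ x in -a..a, exp (-m * x ^ 2 + m * x ^ 4)
      ≤ ∫ x in -a..a, (exp (-m * x ^ 2) + m * (x ^ 4 * exp (-(m * (1 - a ^ 2)) * x ^ 2))) :=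
        intervalIntegral.integral_mono_on (by linarith)
          (Continuous.intervalIntegrable (by fun_prop) _ _) (hg.add hmoment).intervalIntegrable
          fun x hx => exp_neg_mul_sq_add_mul_pow_four_le hm.le (sq_le_sq' hx.1 hx.2)
    _ ≤ ∫ x, (exp (-m * x ^ 2) + m * (x ^ 4 * exp (-(m * (1 - a ^ 2)) * x ^ 2))) := by
        rw [intervalIntegral.integral_of_le (by linarith)]
        exact setIntegral_le_integral (hg.add hmoment) (.of_forall fun x => by positivity)
    _ = _ := by
        rw [integral_add hg hmoment, integral_const_mul, integral_gaussian,
          integral_pow_four_mul_exp_neg_mul_sq hc]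

lemma three_div_four_mul_pow_four_mul_sq_le {m a : ℝ} (hm : 400 ≤ m) (ha : 3 / 16 ≤ a) :
    3 / (4 * a ^ 4 * m ^ 2) ≤ 2 * m⁻¹ := by
  have ha4 : (3 / 16) ^ 4 ≤ a ^ 4 := pow_le_pow_left₀ (by norm_num) ha 4
  rw [div_le_iff₀ (by positivity)]
  field_simp
  nlinarith

lemma mul_fourth_moment_le {m b : ℝ} (hm : 0 < m) (hb : 7 / 8 ≤ b) :
    m * (3 / (4 * (m * b) ^ 2) * √(π / (m * b))) ≤ 2 * m⁻¹ * √(π / m) := by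
  have hsqrt : √(π / (m * b)) ≤ 2 * √(π / m) := by
    rw [sqrt_le_iff, mul_pow, sq_sqrt (by positivity)]
    refine ⟨by positivity, ?_⟩
    rw [div_le_iff₀ (by positivity)]
    field_simp
    nlinarith [pi_pos]
  calc m * (3 / (4 * (m * b) ^ 2) * √(π / (m * b)))
      ≤ m * (3 / (4 * (m * b) ^ 2) * (2 * √(π / m))) := by gcongr
    _ = 3 / (2 * b ^ 2) * m⁻¹ * √(π / m) := by field_simp; ring
    _ ≤ 2 * m⁻¹ * √(π / m) := by
        gcongr
        rw [div_le_iff₀ (by positivity)]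
        nlinarith

theorem gaussian_like_integral_estimate :
    ∃ m₀ : ℝ, 0 < m₀ ∧ ∀ m : ℝ, m₀ ≤ m →
      |(∫ x in (-(Real.pi / 16))..(Real.pi / 16),
          Real.exp (-m * x ^ 2 + m * x ^ 4)) - Real.sqrt (Real.pi / m)| ≤
        2 * m⁻¹ * Real.sqrt (Real.pi / m) := by
  refine ⟨400, by norm_num, fun m hm => ?_⟩
  have hm0 : 0 < m := by linarith
  have ha : 3 / 16 ≤ π / 16 := by linarith [pi_gt_three]
  have ha2 : (π / 16) ^ 2 ≤ 1 / 16 := by nlinarith [pi_lt_four]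
  set a := π / 16
  have hlower : √(π / m) - 3 / (4 * a ^ 4 * m ^ 2) * √(π / m) ≤
      ∫ x in -a..a, exp (-m * x ^ 2 + m * x ^ 4) :=
    (sub_le_intervalIntegral_exp_neg_mul_sq hm0 (by linarith)).trans <|
      intervalIntegral.integral_mono (by linarith) (Continuous.intervalIntegrable (by fun_prop) _ _)
        (Continuous.intervalIntegrable (by fun_prop) _ _)
        fun x => exp_le_exp.mpr (le_add_of_nonneg_right (by positivity))
  have hupper := intervalIntegral_exp_neg_mul_sq_add_mul_pow_four_le hm0 (a := a) (by linarith)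
    (by linarith)
  have herr_lower := mul_le_mul_of_nonneg_right (three_div_four_mul_pow_four_mul_sq_le hm ha)
    (sqrt_nonneg (π / m))
  have herr_upper := mul_fourth_moment_le hm0 (b := 1 - a ^ 2) (by linarith)
  rw [abs_le]
  constructor <;> linarith
end

section
/- For every real m > 0 and every integer k ≥ 1, one has ∫_{−π/16}^{π/16} |x|^k · exp(−m x² + m x⁴) dx ≤ √(2π) · k^{k/2} · m^{−(k+1)/2}. -/
open Real MeasureTheory

lemma aux_pow_le (y c : ℝ) (hy : 0 ≤ y) (hc : 0 < c) (k : ℕ) :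
    y ^ k ≤ ((k:ℝ)/(2*c)) ^ ((k:ℝ)/2) * Real.exp (c * y^2 - (k:ℝ)/2) := by
  rcases Nat.eq_zero_or_pos k with rfl | hk
  · simp [Real.one_le_exp_iff]
    positivity
  have hk0 : (0:ℝ) < k := by exact_mod_cast hk
  have h1 : 2*c*y^2/k ≤ Real.exp (2*c*y^2/k - 1) := by
    have := Real.add_one_le_exp (2*c*y^2/k - 1)
    linarith
  have h2 : (2*c*y^2/k) ^ ((k:ℝ)/2) ≤ (Real.exp (2*c*y^2/k - 1)) ^ ((k:ℝ)/2) := by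
    apply Real.rpow_le_rpow (by positivity) h1 (by positivity)
  rw [← Real.exp_mul] at h2
  have hrw : (2*c*y^2/k - 1) * ((k:ℝ)/2) = c*y^2 - (k:ℝ)/2 := by
    field_simp
  rw [hrw] at h2
  have h3 : (2*c*y^2/k) ^ ((k:ℝ)/2) = (2*c/k) ^ ((k:ℝ)/2) * y ^ (k:ℝ) := by
    rw [show 2*c*y^2/k = (2*c/k) * y^2 by ring, Real.mul_rpow (by positivity) (by positivity)]
    congr 1
    rw [← Real.rpow_natCast y 2, ← Real.rpow_mul hy]
    push_cast
    rw [show (2:ℝ)*((k:ℝ)/2) = (k:ℝ) by ring]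
  rw [h3] at h2
  have h4 : y ^ (k:ℝ) = y ^ k := Real.rpow_natCast y k
  rw [h4] at h2
  have h5 : ((k:ℝ)/(2*c)) ^ ((k:ℝ)/2) * (2*c/k) ^ ((k:ℝ)/2) = 1 := by
    rw [← Real.mul_rpow (by positivity) (by positivity)]
    rw [show (k:ℝ)/(2*c) * (2*c/k) = 1 by field_simp]
    simp
  calc y ^ k = ((k:ℝ)/(2*c)) ^ ((k:ℝ)/2) * ((2*c/k) ^ ((k:ℝ)/2) * y ^ k) := by
        rw [← mul_assoc, h5, one_mul]
    _ ≤ ((k:ℝ)/(2*c)) ^ ((k:ℝ)/2) * Real.exp (c*y^2 - (k:ℝ)/2) := by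
        apply mul_le_mul_of_nonneg_left h2 (by positivity)

theorem twisted_gaussian_moment_bound (m : ℝ) (hm : 0 < m) (k : ℕ) (hk : 1 ≤ k) :
    (∫ x in (-(Real.pi / 16))..(Real.pi / 16),
        |x| ^ k * Real.exp (-m * x ^ 2 + m * x ^ 4)) ≤
      Real.sqrt (2 * Real.pi) * (k : ℝ) ^ ((k : ℝ) / 2) *
        m ^ (-((k : ℝ) + 1) / 2) := by
  have pi_pos := Real.pi_pos
  have hkR : (1:ℝ) ≤ (k:ℝ) := by exact_mod_cast hk
  have hkpos : (0:ℝ) < (k:ℝ) := by linarith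
  set e1 : ℝ := (k:ℝ)/2 with he1
  set c : ℝ := (9/20)*m with hc
  have hc0 : 0 < c := by rw [hc]; positivity
  set K : ℝ := ((k:ℝ)/((9/10)*m)) ^ e1 * Real.exp (-e1) with hK
  have hK0 : (0:ℝ) ≤ K := by rw [hK]; positivity
  have hab : -(Real.pi/16) ≤ Real.pi/16 := by linarith
  -- pointwise bound on the interval
  have hpt : ∀ x ∈ Set.Icc (-(Real.pi/16)) (Real.pi/16),
      |x|^k * Real.exp (-m*x^2+m*x^4) ≤ K * Real.exp (-c * x^2) := by
    intro x hx
    have hx2 : x^2 ≤ 1/16 := by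
      have h4 : |x| ≤ 1/4 := by
        have hp4 := Real.pi_le_four
        rw [abs_le]
        constructor
        · linarith [hx.1]
        · linarith [hx.2]
      calc x^2 = |x|^2 := (sq_abs x).symm
        _ ≤ (1/4:ℝ)^2 := by
            apply pow_le_pow_left₀ (abs_nonneg x) h4
        _ = 1/16 := by norm_num
    have hexp : Real.exp (-m*x^2+m*x^4) ≤ Real.exp (-(9/10)*m*x^2) := by
      rw [Real.exp_le_exp]
      nlinarith [mul_le_mul_of_nonneg_left hx2 (mul_nonneg hm.le (sq_nonneg x))]
    have haux := aux_pow_le |x| c (abs_nonneg x) hc0 k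
    rw [sq_abs] at haux
    have h2c : 2*c = (9/10)*m := by rw [hc]; ring
    rw [h2c] at haux
    calc |x|^k * Real.exp (-m*x^2+m*x^4)
        ≤ |x|^k * Real.exp (-(9/10)*m*x^2) := by
          apply mul_le_mul_of_nonneg_left hexp (by positivity)
      _ ≤ (((k:ℝ)/((9/10)*m)) ^ e1 * Real.exp (c*x^2 - e1)) * Real.exp (-(9/10)*m*x^2) := by
          apply mul_le_mul_of_nonneg_right _ (Real.exp_pos _).le
          exact haux
      _ = K * Real.exp (-c * x^2) := by
          have hee : Real.exp (c*x^2 - e1) * Real.exp (-(9/10)*m*x^2)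
              = Real.exp (-e1) * Real.exp (-c*x^2) := by
            rw [← Real.exp_add, ← Real.exp_add]
            congr 1
            rw [hc]; ring
          rw [hK, mul_assoc, hee, ← mul_assoc]
  -- integrability
  have hcont1 : Continuous fun x : ℝ => |x|^k * Real.exp (-m*x^2+m*x^4) := by
    fun_prop
  have hcont2 : Continuous fun x : ℝ => K * Real.exp (-c * x^2) := by
    fun_prop
  have step1 : (∫ x in (-(Real.pi / 16))..(Real.pi / 16),
        |x| ^ k * Real.exp (-m * x ^ 2 + m * x ^ 4)) ≤
      ∫ x in (-(Real.pi / 16))..(Real.pi / 16), K * Real.exp (-c * x^2) := by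
    apply intervalIntegral.integral_mono_on hab
      (hcont1.intervalIntegrable _ _) (hcont2.intervalIntegrable _ _)
    intro x hx
    exact hpt x hx
  have step2 : (∫ x in (-(Real.pi / 16))..(Real.pi / 16), K * Real.exp (-c * x^2))
      ≤ K * Real.sqrt (Real.pi / c) := by
    rw [intervalIntegral.integral_const_mul]
    apply mul_le_mul_of_nonneg_left _ hK0
    rw [← integral_gaussian c]
    rw [intervalIntegral.integral_of_le hab]
    apply MeasureTheory.setIntegral_le_integral (integrable_exp_neg_mul_sq hc0)
    filter_upwards with x
    positivity
  -- the constants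
  have he2 : (2:ℝ) ≤ Real.exp 1 := by
    have := Real.add_one_le_exp 1
    linarith
  have hconst : (9/10:ℝ)^(-e1) * Real.exp (-e1) * (9/20:ℝ)^(-(1/2):ℝ) ≤ (2:ℝ)^((1/2):ℝ) := by
    have h1 : (9/10:ℝ)^(-e1) * Real.exp (-e1) = ((9/10)*Real.exp 1)^(-e1) := by
      rw [Real.mul_rpow (by norm_num) (Real.exp_pos 1).le, Real.exp_one_rpow]
    have hb1 : (1:ℝ) ≤ (9/10)*Real.exp 1 := by nlinarith
    have h2 : ((9/10)*Real.exp 1)^(-e1) ≤ ((9/10)*Real.exp 1)^(-(1/2):ℝ) := by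
      apply Real.rpow_le_rpow_of_exponent_le hb1
      rw [he1]; linarith
    have h3 : ((9/10)*Real.exp 1)^(-(1/2):ℝ) * (9/20:ℝ)^(-(1/2):ℝ)
        = ((9/10)*Real.exp 1*(9/20))^(-(1/2):ℝ) := by
      rw [← Real.mul_rpow (by positivity) (by norm_num)]
    have h4 : ((9/10)*Real.exp 1*(9/20))^(-(1/2):ℝ) ≤ (2:ℝ)^((1/2):ℝ) := by
      rw [Real.rpow_neg (by positivity), ← Real.inv_rpow (by positivity)]
      apply Real.rpow_le_rpow (by positivity) _ (by norm_num)
      have hd : (1/2:ℝ) ≤ (9/10)*Real.exp 1*(9/20) := by nlinarith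
      calc ((9/10)*Real.exp 1*(9/20))⁻¹ ≤ (1/2:ℝ)⁻¹ := by
            apply inv_anti₀ (by norm_num) hd
        _ = 2 := by norm_num
    calc (9/10:ℝ)^(-e1) * Real.exp (-e1) * (9/20:ℝ)^(-(1/2):ℝ)
        = ((9/10)*Real.exp 1)^(-e1) * (9/20:ℝ)^(-(1/2):ℝ) := by rw [h1]
      _ ≤ ((9/10)*Real.exp 1)^(-(1/2):ℝ) * (9/20:ℝ)^(-(1/2):ℝ) := by
          apply mul_le_mul_of_nonneg_right h2 (by positivity)
      _ = ((9/10)*Real.exp 1*(9/20))^(-(1/2):ℝ) := h3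
      _ ≤ (2:ℝ)^((1/2):ℝ) := h4
  -- algebraic identities
  have e2 : ((k:ℝ)/((9/10)*m))^e1 = (k:ℝ)^e1 * ((9/10:ℝ)^(-e1) * m^(-e1)) := by
    rw [Real.div_rpow hkpos.le (by positivity), Real.mul_rpow (by norm_num) hm.le,
      Real.rpow_neg (by norm_num : (0:ℝ) ≤ 9/10), Real.rpow_neg hm.le]
    field_simp
  have e3 : Real.sqrt (Real.pi/c) = Real.pi^((1/2):ℝ) * ((9/20:ℝ)^(-(1/2):ℝ) * m^(-(1/2):ℝ)) := by
    rw [hc, Real.sqrt_eq_rpow, Real.div_rpow pi_pos.le (by positivity),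
      Real.mul_rpow (by norm_num) hm.le,
      Real.rpow_neg (by norm_num : (0:ℝ) ≤ 9/20), Real.rpow_neg hm.le]
    field_simp
  have e4 : Real.sqrt (2*Real.pi) = (2:ℝ)^((1/2):ℝ) * Real.pi^((1/2):ℝ) := by
    rw [Real.sqrt_eq_rpow, Real.mul_rpow (by norm_num) pi_pos.le]
  have e5 : m^(-e1) * m^(-(1/2):ℝ) = m^(-((k:ℝ)+1)/2) := by
    rw [← Real.rpow_add hm]
    congr 1
    rw [he1]; ring
  have final : K * Real.sqrt (Real.pi/c) ≤
      Real.sqrt (2*Real.pi) * (k:ℝ)^e1 * m^(-((k:ℝ)+1)/2) := by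
    calc K * Real.sqrt (Real.pi/c)
        = ((9/10:ℝ)^(-e1) * Real.exp (-e1) * (9/20:ℝ)^(-(1/2):ℝ)) *
            ((k:ℝ)^e1 * Real.pi^((1/2):ℝ) * (m^(-e1) * m^(-(1/2):ℝ))) := by
          rw [hK, e2, e3]; ring
      _ = ((9/10:ℝ)^(-e1) * Real.exp (-e1) * (9/20:ℝ)^(-(1/2):ℝ)) *
            ((k:ℝ)^e1 * Real.pi^((1/2):ℝ) * m^(-((k:ℝ)+1)/2)) := by rw [e5]
      _ ≤ (2:ℝ)^((1/2):ℝ) *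
            ((k:ℝ)^e1 * Real.pi^((1/2):ℝ) * m^(-((k:ℝ)+1)/2)) := by
          apply mul_le_mul_of_nonneg_right hconst (by positivity)
      _ = Real.sqrt (2*Real.pi) * (k:ℝ)^e1 * m^(-((k:ℝ)+1)/2) := by
          rw [e4]; ring
  calc (∫ x in (-(Real.pi / 16))..(Real.pi / 16),
        |x| ^ k * Real.exp (-m * x ^ 2 + m * x ^ 4))
      ≤ ∫ x in (-(Real.pi / 16))..(Real.pi / 16), K * Real.exp (-c * x^2) := step1
    _ ≤ K * Real.sqrt (Real.pi / c) := step2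
    _ ≤ Real.sqrt (2*Real.pi) * (k:ℝ)^e1 * m^(-((k:ℝ)+1)/2) := final
end

section
/- For every integer ℓ ≥ 1, every integer k with 1 ≤ k ≤ ℓ, and all real numbers x_1, …, x_ℓ, one has k! · Σ_{1 ≤ j_1 < ⋯ < j_k ≤ ℓ} x_{j_1}² ⋯ x_{j_k}² ≤ (Σ_{1 ≤ j ≤ ℓ} x_j²)^k ≤ k! · Σ_{1 ≤ j_1 < ⋯ < j_k ≤ ℓ} x_{j_1}² ⋯ x_{j_k}² + (k(k−1)/2) · (max_{1 ≤ j ≤ ℓ} x_j²) · (Σ_{1 ≤ j ≤ ℓ} x_j²)^{k−1}. -/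
open Finset

lemma key_identity {ι : Type*} [Fintype ι] [DecidableEq ι] (y : ι → ℝ) (k : ℕ) :
    (∑ j, y j) * (∑ s ∈ powersetCard k (univ : Finset ι), ∏ j ∈ s, y j)
      = ((k : ℝ) + 1) * (∑ s ∈ powersetCard (k + 1) (univ : Finset ι), ∏ j ∈ s, y j)
        + ∑ s ∈ powersetCard k (univ : Finset ι), (∏ j ∈ s, y j) * (∑ t ∈ s, y t) := by
  have h1 : (∑ j, y j) * (∑ s ∈ powersetCard k (univ : Finset ι), ∏ j ∈ s, y j)
      = (∑ s ∈ powersetCard k (univ : Finset ι), ∑ t ∈ sᶜ, ∏ j ∈ insert t s, y j)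
        + ∑ s ∈ powersetCard k (univ : Finset ι), (∏ j ∈ s, y j) * (∑ t ∈ s, y t) := by
    rw [Finset.mul_sum, ← Finset.sum_add_distrib]
    refine Finset.sum_congr rfl fun s _ => ?_
    have hsplit : (∑ j, y j) = (∑ t ∈ sᶜ, y t) + ∑ t ∈ s, y t := by
      rw [add_comm, Finset.sum_add_sum_compl]
    rw [hsplit, add_mul, Finset.sum_mul]
    congr 1
    · refine Finset.sum_congr rfl fun t ht => ?_
      rw [Finset.prod_insert (Finset.mem_compl.mp ht), mul_comm]
    · ring
  have h2 : (∑ s ∈ powersetCard k (univ : Finset ι), ∑ t ∈ sᶜ, ∏ j ∈ insert t s, y j)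
      = ∑ s ∈ powersetCard (k + 1) (univ : Finset ι), ∑ t ∈ s, ∏ j ∈ s, y j := by
    rw [Finset.sum_sigma', Finset.sum_sigma']
    refine Finset.sum_nbij' (fun p => ⟨insert p.2 p.1, p.2⟩) (fun q => ⟨q.1.erase q.2, q.2⟩)
      ?_ ?_ ?_ ?_ ?_
    · rintro ⟨s, t⟩ hp
      simp only [Finset.mem_sigma, Finset.mem_powersetCard_univ, Finset.mem_compl] at hp ⊢
      refine ⟨?_, Finset.mem_insert_self _ _⟩
      rw [Finset.card_insert_of_notMem hp.2, hp.1]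
    · rintro ⟨s, t⟩ hq
      simp only [Finset.mem_sigma, Finset.mem_powersetCard_univ, Finset.mem_compl] at hq ⊢
      refine ⟨?_, Finset.notMem_erase _ _⟩
      rw [Finset.card_erase_of_mem hq.2, hq.1]
      omega
    · rintro ⟨s, t⟩ hp
      simp only [Finset.mem_sigma, Finset.mem_powersetCard_univ, Finset.mem_compl] at hp
      simp [Finset.erase_insert hp.2]
    · rintro ⟨s, t⟩ hq
      simp only [Finset.mem_sigma, Finset.mem_powersetCard_univ, Finset.mem_compl] at hq
      simp [Finset.insert_erase hq.2]
    · rintro ⟨s, t⟩ hp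
      rfl
  have h3 : (∑ s ∈ powersetCard (k + 1) (univ : Finset ι), ∑ t ∈ s, ∏ j ∈ s, y j)
      = ((k : ℝ) + 1) * ∑ s ∈ powersetCard (k + 1) (univ : Finset ι), ∏ j ∈ s, y j := by
    rw [Finset.mul_sum]
    refine Finset.sum_congr rfl fun s hs => ?_
    rw [Finset.sum_const, Finset.mem_powersetCard_univ.mp hs, nsmul_eq_mul]
    push_cast; ring
  rw [h1, h2, h3]

lemma sym_ineq_aux {ι : Type*} [Fintype ι] [DecidableEq ι] (y : ι → ℝ) (hy : ∀ i, 0 ≤ y i)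
    (M : ℝ) (hM : ∀ i, y i ≤ M) (hM0 : 0 ≤ M) :
    ∀ k : ℕ, 1 ≤ k →
      (k.factorial : ℝ) * (∑ s ∈ powersetCard k (univ : Finset ι), ∏ j ∈ s, y j)
          ≤ (∑ j, y j) ^ k ∧
        (∑ j, y j) ^ k ≤
          (k.factorial : ℝ) * (∑ s ∈ powersetCard k (univ : Finset ι), ∏ j ∈ s, y j) +
            ((k : ℝ) * ((k : ℝ) - 1) / 2) * M * (∑ j, y j) ^ (k - 1) := by
  have hS : (0 : ℝ) ≤ ∑ j, y j := Finset.sum_nonneg fun i _ => hy i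
  have hE : ∀ m : ℕ, (0 : ℝ) ≤ ∑ s ∈ powersetCard m (univ : Finset ι), ∏ j ∈ s, y j :=
    fun m => Finset.sum_nonneg fun s _ => Finset.prod_nonneg fun j _ => hy j
  have hR : ∀ m : ℕ,
      (0 : ℝ) ≤ ∑ s ∈ powersetCard m (univ : Finset ι), (∏ j ∈ s, y j) * (∑ t ∈ s, y t) :=
    fun m => Finset.sum_nonneg fun s _ => mul_nonneg
      (Finset.prod_nonneg fun j _ => hy j) (Finset.sum_nonneg fun t _ => hy t)
  have hRle : ∀ m : ℕ,
      (∑ s ∈ powersetCard m (univ : Finset ι), (∏ j ∈ s, y j) * (∑ t ∈ s, y t))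
        ≤ (m : ℝ) * M * ∑ s ∈ powersetCard m (univ : Finset ι), ∏ j ∈ s, y j := by
    intro m
    rw [Finset.mul_sum]
    refine Finset.sum_le_sum fun s hs => ?_
    have h1 : (∑ t ∈ s, y t) ≤ (m : ℝ) * M := by
      calc (∑ t ∈ s, y t) ≤ ∑ _t ∈ s, M := Finset.sum_le_sum fun t _ => hM t
      _ = (s.card : ℝ) * M := by rw [Finset.sum_const, nsmul_eq_mul]
      _ = (m : ℝ) * M := by rw [Finset.mem_powersetCard_univ.mp hs]
    calc (∏ j ∈ s, y j) * (∑ t ∈ s, y t) ≤ (∏ j ∈ s, y j) * ((m : ℝ) * M) :=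
          mul_le_mul_of_nonneg_left h1 (Finset.prod_nonneg fun j _ => hy j)
      _ = (m : ℝ) * M * ∏ j ∈ s, y j := by ring
  intro k hk
  induction k, hk using Nat.le_induction with
  | base =>
      have h1 : (∑ s ∈ powersetCard 1 (univ : Finset ι), ∏ j ∈ s, y j) = ∑ j, y j := by
        rw [Finset.powersetCard_one, Finset.sum_map]
        simp
      simp [h1]
  | succ k hk ih =>
      obtain ⟨ih1, ih2⟩ := ih
      set S := ∑ j, y j with hSdef
      set E : ℕ → ℝ := fun m => ∑ s ∈ powersetCard m (univ : Finset ι), ∏ j ∈ s, y j with hEdef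
      set R := ∑ s ∈ powersetCard k (univ : Finset ι), (∏ j ∈ s, y j) * (∑ t ∈ s, y t) with hRdef
      have hkey : S * E k = ((k : ℝ) + 1) * E (k + 1) + R := key_identity y k
      have hfac : ((k + 1).factorial : ℝ) = ((k : ℝ) + 1) * (k.factorial : ℝ) := by
        rw [Nat.factorial_succ]; push_cast; ring
      have hpow : S * S ^ (k - 1) = S ^ k := by
        rw [← pow_succ', Nat.sub_add_cancel hk]
      constructor
      · have : S ^ (k + 1) = S * S ^ k := by ring
        rw [this, hfac]
        calc ((k : ℝ) + 1) * (k.factorial : ℝ) * E (k + 1)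
              ≤ (k.factorial : ℝ) * (((k : ℝ) + 1) * E (k + 1) + R) := by
                nlinarith [hR k, (Nat.cast_pos (α := ℝ)).mpr (Nat.factorial_pos k)]
          _ = (k.factorial : ℝ) * (S * E k) := by rw [hkey]
          _ ≤ S * S ^ k := by
                rw [← mul_assoc, mul_comm (k.factorial : ℝ) S, mul_assoc]
                exact mul_le_mul_of_nonneg_left ih1 hS
      · have step1 : S ^ (k + 1) ≤ S * ((k.factorial : ℝ) * E k
            + ((k : ℝ) * ((k : ℝ) - 1) / 2) * M * S ^ (k - 1)) := by
          have : S ^ (k + 1) = S * S ^ k := by ring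
          rw [this]
          exact mul_le_mul_of_nonneg_left ih2 hS
        have step2 : S * ((k.factorial : ℝ) * E k
            + ((k : ℝ) * ((k : ℝ) - 1) / 2) * M * S ^ (k - 1))
            = (k.factorial : ℝ) * (((k : ℝ) + 1) * E (k + 1) + R)
              + ((k : ℝ) * ((k : ℝ) - 1) / 2) * M * S ^ k := by
          rw [← hkey]
          calc S * ((k.factorial : ℝ) * E k
              + ((k : ℝ) * ((k : ℝ) - 1) / 2) * M * S ^ (k - 1))
              = (k.factorial : ℝ) * (S * E k)
                + ((k : ℝ) * ((k : ℝ) - 1) / 2) * M * (S * S ^ (k - 1)) := by ring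
            _ = (k.factorial : ℝ) * (S * E k)
                + ((k : ℝ) * ((k : ℝ) - 1) / 2) * M * S ^ k := by rw [hpow]
        have step3 : (k.factorial : ℝ) * R ≤ (k : ℝ) * M * S ^ k := by
          calc (k.factorial : ℝ) * R ≤ (k.factorial : ℝ) * ((k : ℝ) * M * E k) := by
                have := hRle k
                nlinarith [(Nat.cast_pos (α := ℝ)).mpr (Nat.factorial_pos k)]
            _ = (k : ℝ) * M * ((k.factorial : ℝ) * E k) := by ring
            _ ≤ (k : ℝ) * M * S ^ k := by
                refine mul_le_mul_of_nonneg_left ih1 ?_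
                positivity
        have hk1 : (k + 1 : ℕ) - 1 = k := by omega
        rw [hk1, hfac]
        calc S ^ (k + 1)
            ≤ (k.factorial : ℝ) * (((k : ℝ) + 1) * E (k + 1) + R)
              + ((k : ℝ) * ((k : ℝ) - 1) / 2) * M * S ^ k := by rw [← step2]; exact step1
          _ = ((k : ℝ) + 1) * (k.factorial : ℝ) * E (k + 1)
              + ((k.factorial : ℝ) * R + ((k : ℝ) * ((k : ℝ) - 1) / 2) * M * S ^ k) := by ring
          _ ≤ ((k : ℝ) + 1) * (k.factorial : ℝ) * E (k + 1)
              + (((k : ℝ) + 1) * (((k : ℝ) + 1) - 1) / 2) * M * S ^ k := by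
                push_cast
                nlinarith [step3]
          _ = ((k : ℝ) + 1) * (k.factorial : ℝ)
                * (∑ s ∈ powersetCard (k + 1) (univ : Finset ι), ∏ j ∈ s, y j)
              + (((k + 1 : ℕ) : ℝ) * (((k + 1 : ℕ) : ℝ) - 1) / 2) * M * S ^ k := by
                simp only [hEdef]; push_cast; ring
      
theorem symmetric_sum_inequality (ℓ k : ℕ) (hℓ : 1 ≤ ℓ) (hk : 1 ≤ k) (hkℓ : k ≤ ℓ)
    (x : Fin ℓ → ℝ) :
    (k.factorial : ℝ) *
        ∑ s ∈ Finset.powersetCard k (Finset.univ : Finset (Fin ℓ)), ∏ j ∈ s, x j ^ 2 ≤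
      (∑ j, x j ^ 2) ^ k ∧
    (∑ j, x j ^ 2) ^ k ≤
      (k.factorial : ℝ) *
          ∑ s ∈ Finset.powersetCard k (Finset.univ : Finset (Fin ℓ)), ∏ j ∈ s, x j ^ 2 +
        ((k : ℝ) * ((k : ℝ) - 1) / 2) *
          (Finset.univ.sup' ⟨⟨0, hℓ⟩, Finset.mem_univ _⟩ fun j => x j ^ 2) *
          (∑ j, x j ^ 2) ^ (k - 1) := by
  set M := Finset.univ.sup' ⟨⟨0, hℓ⟩, Finset.mem_univ _⟩ fun j => x j ^ 2 with hMdef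
  have hM : ∀ i, x i ^ 2 ≤ M := fun i => Finset.le_sup' (fun j => x j ^ 2) (Finset.mem_univ i)
  have hM0 : (0 : ℝ) ≤ M := le_trans (sq_nonneg _) (hM ⟨0, hℓ⟩)
  exact sym_ineq_aux (fun j => x j ^ 2) (fun i => sq_nonneg _) M hM hM0 k hk
end

section
/- Let H_1, …, H_k be connected graphs, each with minimum degree at least 2, realized as subgraphs of a common complete graph (i.e., each H_i is given by a set of edges on a common vertex set, with vertex set V(H_i) the set of endpoints of its edges). Let G be their union (vertex set ⋃_i V(H_i), edge set ⋃_i E(H_i)), and let E_sing be the set of edges that belong to exactly one of the edge sets E(H_1), …, E(H_k). Then |V(G)| − |E_sing|/2 ≤ (1/2)·Σ_{i=1}^k |V(H_i)|. -/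
/-!
A vertex lying in only one `H i` sees all of its (at least two) edges in `H i` alone, so these
edges are singly covered; as an edge has only two ends, such private vertices number at most
`|E_sing|`. Every other vertex of the union lies in at least two of the `H i`, hence
`∑ |V(H i)| ≥ 2 |V(G)| - #private ≥ 2 |V(G)| - |E_sing|`.
-/

open SimpleGraph Finset

theorem Sym2.card_filter_mem_le_two {V : Type*} [DecidableEq V] (s : Finset V) (e : Sym2 V) :
    #{v ∈ s | v ∈ e} ≤ 2 := by
  induction e using Sym2.ind with
  | _ a b =>
    calc #{v ∈ s | v ∈ s(a, b)} ≤ #{a, b} := card_le_card fun v hv => by simp_all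
      _ ≤ 2 := card_le_two

theorem Finset.card_le_card_of_two_le_card_filter_mem {V : Type*} [DecidableEq V] {s : Finset V}
    {t : Finset (Sym2 V)} (h : ∀ v ∈ s, 2 ≤ #{e ∈ t | v ∈ e}) : #s ≤ #t := by
  have := card_mul_le_card_mul (fun v e => v ∈ e) h fun e _ => Sym2.card_filter_mem_le_two s e
  omega

namespace SimpleGraph

open scoped Classical

variable {V ι : Type*} [Fintype V] {H : ι → SimpleGraph V}

theorem two_le_card_filter_existsUnique_edgeSet_mem {i : ι} {v : V}
    (hv : ∀ j, v ∈ (H j).support → j = i) (hdeg : 2 ≤ Nat.card ((H i).neighborSet v)) :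
    2 ≤ #{e : Sym2 V | (∃! j, e ∈ (H j).edgeSet) ∧ v ∈ e} := by
  have hmaps : ∀ w ∈ ((H i).neighborSet v).toFinset,
      s(v, w) ∈ ({e : Sym2 V | (∃! j, e ∈ (H j).edgeSet) ∧ v ∈ e} : Finset _) := by
    intro w hw
    rw [Set.mem_toFinset, mem_neighborSet] at hw
    simp only [mem_filter, mem_univ, true_and, Sym2.mem_mk_left, and_true]
    exact ⟨i, hw, fun j hj => hv j ⟨w, hj⟩⟩
  calc 2 ≤ Nat.card ((H i).neighborSet v) := hdeg
    _ = #((H i).neighborSet v).toFinset := by rw [Nat.card_eq_fintype_card, Set.toFinset_card]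
    _ ≤ _ := card_le_card_of_injOn _ hmaps fun a _ b _ hab => Sym2.congr_right.mp hab

theorem card_existsUnique_support_mem_le
    (hdeg : ∀ i, ∀ v ∈ (H i).support, 2 ≤ Nat.card ((H i).neighborSet v)) :
    #{v : V | ∃! i, v ∈ (H i).support} ≤ #{e : Sym2 V | ∃! i, e ∈ (H i).edgeSet} := by
  refine card_le_card_of_two_le_card_filter_mem fun v hv => ?_
  obtain ⟨i, hvi, huniq⟩ := (mem_filter.mp hv).2
  simpa only [filter_filter] using two_le_card_filter_existsUnique_edgeSet_mem huniq (hdeg i v hvi)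

theorem two_le_card_support_mem_add_ite [Fintype ι] {v : V} (hv : v ∈ (⨆ i, H i).support) :
    2 ≤ #{i | v ∈ (H i).support} + if ∃! i, v ∈ (H i).support then 1 else 0 := by
  obtain ⟨w, hw⟩ := hv
  obtain ⟨i, hi⟩ := iSup_adj.mp hw
  have hpos : 0 < #{i | v ∈ (H i).support} := card_pos.mpr ⟨i, by simpa using ⟨w, hi⟩⟩
  split_ifs with huniq
  · omega
  · by_contra! hlt
    have hle : #{i | v ∈ (H i).support} ≤ 1 := by omega
    exact huniq ⟨i, ⟨w, hi⟩, fun j hj =>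
      card_le_one.mp hle j (by simpa using hj) i (by simpa using ⟨w, hi⟩)⟩

theorem two_mul_card_iSup_support_le [Fintype ι] :
    2 * #{v : V | v ∈ (⨆ i, H i).support} ≤
      ∑ i, #{v | v ∈ (H i).support} + #{v : V | ∃! i, v ∈ (H i).support} := by
  calc 2 * #{v : V | v ∈ (⨆ i, H i).support}
      ≤ ∑ v ∈ {v : V | v ∈ (⨆ i, H i).support},
          (#{i | v ∈ (H i).support} + if ∃! i, v ∈ (H i).support then 1 else 0) := by
        rw [mul_comm, ← smul_eq_mul]
        exact card_nsmul_le_sum _ _ _ fun v hv =>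
          two_le_card_support_mem_add_ite (mem_filter.mp hv).2
    _ ≤ ∑ v, (#{i | v ∈ (H i).support} + if ∃! i, v ∈ (H i).support then 1 else 0) :=
        sum_le_sum_of_subset (subset_univ _)
    _ = ∑ i, #{v | v ∈ (H i).support} + #{v : V | ∃! i, v ∈ (H i).support} := by
        simp only [sum_add_distrib, card_filter]
        rw [sum_comm]

end SimpleGraph

theorem overlay_vertex_edge_inequality_general {V : Type} [Fintype V] (k : ℕ)
    (H : Fin k → SimpleGraph V)
    -- each `H i` has minimum degree at least 2 (on its support):
    (hdeg : ∀ i, ∀ v ∈ (H i).support, 2 ≤ Nat.card ((H i).neighborSet v)) :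
    (Nat.card (⨆ i, H i).support : ℝ) -
        (Nat.card {e : Sym2 V // ∃! i : Fin k, e ∈ (H i).edgeSet} : ℝ) / 2 ≤
      (1 / 2) * ∑ i, (Nat.card (H i).support : ℝ) := by
  classical
  have hcount := (two_mul_card_iSup_support_le (H := H)).trans
    (Nat.add_le_add_left (card_existsUnique_support_mem_le hdeg) _)
  simp only [Nat.card_eq_fintype_card, Fintype.card_subtype]
  have hcount_real : (2 : ℝ) * #{v | v ∈ (⨆ i, H i).support} ≤
      ∑ i, (#{v | v ∈ (H i).support} : ℝ) + #{e | ∃! i, e ∈ (H i).edgeSet} := by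
    exact_mod_cast hcount
  linarith

theorem overlay_vertex_edge_inequality {V : Type} [Fintype V] (k : ℕ)
    (H : Fin k → SimpleGraph V)
    -- each `H i`, viewed as a graph on its support (the endpoints of its edges),
    -- is connected:
    (hconn : ∀ i, ((H i).induce (H i).support).Connected)
    -- each `H i` has minimum degree at least 2 (on its support):
    (hdeg : ∀ i, ∀ v ∈ (H i).support, 2 ≤ Nat.card ((H i).neighborSet v)) :
    (Nat.card (⨆ i, H i).support : ℝ) -
        (Nat.card {e : Sym2 V // ∃! i : Fin k, e ∈ (H i).edgeSet} : ℝ) / 2 ≤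
      (1 / 2) * ∑ i, (Nat.card (H i).support : ℝ) :=
  overlay_vertex_edge_inequality_general k H hdeg
end
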